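/- arXiv:2210.15558 — 2 statements merged into one kernel-verified Lean document; each statement's English description precedes it below -/
import Mathlib

section
/- Suppose ν : U → ℂ is holomorphic on an open set U ⊆ ℂ and μ̃ : U → ℂ is holomorphic. Writing φ_z = (μ̃/4)(1-ν²), (iμ̃/4)(1+ν²), (μ̃/2)ν componentwise, the combination 2X_{zz}Re ν + 2Y_{zz}Im ν + Z_{zz}(|ν|²-1) divided by (|ν|²+1) equals -μ̃ν_z/2, where X_z, Y_z, Z_z denote the given components and subscript z denotes complex differentiation. -/
/-!
Write `Φ = μ̃ · φ(ν)` with `φ(w) = ((1 - w²)/4, i(1 + w²)/4, w/2)`, and pair vectors of `ℂ³`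
ℂ-bilinearly with the unit normal `N(w) = (2 Re w, 2 Im w, |w|² - 1)/(|w|² + 1)` given by
inverse stereographic projection. Then `⟨φ(w), N(w)⟩ = 0` and `⟨φ'(w), N(w)⟩ = -1/2`, so by the product and chain rules
`⟨Φ_z, N(ν)⟩ = μ̃_z ⟨φ(ν), N(ν)⟩ + μ̃ ν_z ⟨φ'(ν), N(ν)⟩ = -μ̃ ν_z / 2`.
-/

open Complex

noncomputable def normalPairing (w x y z : ℂ) : ℂ :=
  (2 * x * (w.re : ℂ) + 2 * y * (w.im : ℂ) + z * ((‖w‖ ^ 2 - 1 : ℝ) : ℂ)) /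
    ((‖w‖ ^ 2 + 1 : ℝ) : ℂ)

namespace normalPairing

theorem mul_add_mul (w a b x y z x' y' z' : ℂ) :
    normalPairing w (a * x + b * x') (a * y + b * y') (a * z + b * z') =
      a * normalPairing w x y z + b * normalPairing w x' y' z' := by
  unfold normalPairing
  ring

theorem denom_ne_zero (w : ℂ) : ((‖w‖ ^ 2 + 1 : ℝ) : ℂ) ≠ 0 := by
  exact_mod_cast (by positivity : ‖w‖ ^ 2 + 1 ≠ 0)

theorem weierstrassData_eq_zero (w : ℂ) :
    normalPairing w ((1 - w ^ 2) / 4) (I * (1 + w ^ 2) / 4) (w / 2) = 0 := by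
  rw [normalPairing, div_eq_zero_iff, or_iff_left (denom_ne_zero w)]
  push_cast [Complex.sq_norm, normSq_apply]
  have hw := (re_add_im w).symm
  generalize w.re = a at *
  generalize w.im = b at *
  subst hw
  linear_combination ((a : ℂ) * b ^ 2 / 2 + I * b ^ 3 / 2) * I_sq

theorem deriv_weierstrassData_eq_neg_half (w : ℂ) :
    normalPairing w (-w / 2) (I * w / 2) (1 / 2) = -1 / 2 := by
  rw [normalPairing, div_eq_iff (denom_ne_zero w)]
  push_cast [Complex.sq_norm, normSq_apply]
  have hw := (re_add_im w).symm
  generalize w.re = a at *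
  generalize w.im = b at *
  subst hw
  linear_combination (b : ℂ) ^ 2 * I_sq

end normalPairing

theorem HasDerivAt.mul_comp {μ ν g : ℂ → ℂ} {p m n g' : ℂ} (hμ : HasDerivAt μ m p)
    (hν : HasDerivAt ν n p) (hg : HasDerivAt g g' (ν p)) :
    HasDerivAt (fun z => μ z * g (ν z)) (m * g (ν p) + μ p * n * g') p :=
  (hμ.mul (hg.comp p hν)).congr_deriv (by rw [Function.comp_apply]; ring)

/-- The local computation of the Hopf differential of a minimal immersion:
with `X_z = (μ̃/4)(1-ν²)`, `Y_z = (iμ̃/4)(1+ν²)`, `Z_z = (μ̃/2)ν`, one has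
`(2 X_zz Re ν + 2 Y_zz Im ν + Z_zz (|ν|²-1))/(|ν|²+1) = -μ̃ ν_z / 2`. -/
theorem hopf_differential_formula
    (U : Set ℂ) (hU : IsOpen U) (μ ν : ℂ → ℂ)
    (hμ : DifferentiableOn ℂ μ U) (hν : DifferentiableOn ℂ ν U)
    (p : ℂ) (hp : p ∈ U) :
    let Xz : ℂ → ℂ := fun z => μ z / 4 * (1 - ν z ^ 2)
    let Yz : ℂ → ℂ := fun z => I * μ z / 4 * (1 + ν z ^ 2)
    let Zz : ℂ → ℂ := fun z => μ z / 2 * ν z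
    (2 * deriv Xz p * ((ν p).re : ℂ) + 2 * deriv Yz p * ((ν p).im : ℂ) +
        deriv Zz p * ((‖ν p‖ ^ 2 - 1 : ℝ) : ℂ)) /
      ((‖ν p‖ ^ 2 + 1 : ℝ) : ℂ) = -(μ p) * deriv ν p / 2 := by
  intro Xz Yz Zz
  have hμp := (hμ.differentiableAt (hU.mem_nhds hp)).hasDerivAt
  have hνp := (hν.differentiableAt (hU.mem_nhds hp)).hasDerivAt
  have hX : deriv Xz p = deriv μ p * ((1 - ν p ^ 2) / 4) + μ p * deriv ν p * (-ν p / 2) := by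
    convert (hμp.mul_comp hνp (g := fun w => (1 - w ^ 2) / 4)
      (((hasDerivAt_id _).pow 2).const_sub 1 |>.div_const 4) |>.deriv) using 1
    · simp only [Xz]; congr 1; funext z; ring
    · ring
  have hY : deriv Yz p = deriv μ p * (I * (1 + ν p ^ 2) / 4) + μ p * deriv ν p * (I * ν p / 2) := by
    convert (hμp.mul_comp hνp (g := fun w => I * (1 + w ^ 2) / 4)
      ((((hasDerivAt_id _).pow 2).const_add 1).const_mul I |>.div_const 4) |>.deriv) using 1
    · simp only [Yz]; congr 1; funext z; ring
    · ring
  have hZ : deriv Zz p = deriv μ p * (ν p / 2) + μ p * deriv ν p * (1 / 2) := by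
    convert (hμp.mul_comp hνp (g := fun w => w / 2) ((hasDerivAt_id _).div_const 2) |>.deriv) using 1
    simp only [Zz]; congr 1; funext z; ring
  change normalPairing (ν p) (deriv Xz p) (deriv Yz p) (deriv Zz p) = _
  rw [hX, hY, hZ, normalPairing.mul_add_mul, normalPairing.weierstrassData_eq_zero,
    normalPairing.deriv_weierstrassData_eq_neg_half]
  ring
end

section
/- Let μ be a holomorphic function on an open connected U ⊆ ℂ, not identically zero, and ν meromorphic on U such that at every zero p of μ of order m, ν has a pole at p of order exactly m/2. Then the three functions (μ/2)(1-ν²), (iμ/2)(1+ν²), and μν extend holomorphically across the zeros of μ, and they have no common zero on U. -/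
/-!
On `U`, the three functions are `Φ₁ = (μ - ψ)/2`, `Φ₂ = i(μ + ψ)/2`, `Φ₃ = χ`, where `ψ = μν²`
and `χ = μν`. Near a zero `p` of `μ` write `μ = (z - p)^{2m} g` and `ν = h/(z - p)^m`; then
`ψ = g h²` and `χ = (z - p)^m g h` off `p`, so both extend holomorphically across `p`, with
`ψ(p) = g(p) h(p)² ≠ 0`. A common zero of `Φ₁` and `Φ₂` is a common zero of `μ` and `ψ`,
which therefore cannot exist.
-/

open Complex Filter
open scoped Topology

open Classical in
noncomputable def fillSingularities (S : Set ℂ) (f : ℂ → ℂ) (z : ℂ) : ℂ :=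
  if z ∈ S then limUnder (𝓝[≠] z) f else f z

section FillSingularities

variable {S : Set ℂ} {f F : ℂ → ℂ} {p : ℂ}

theorem fillSingularities_of_notMem (hp : p ∉ S) : fillSingularities S f p = f p := by
  simp [fillSingularities, hp]

theorem fillSingularities_eventuallyEq_self (hS : ∀ᶠ z in 𝓝 p, z ∉ S) :
    fillSingularities S f =ᶠ[𝓝 p] f :=
  hS.mono fun _ => fillSingularities_of_notMem

theorem fillSingularities_eventuallyEq_of_eventuallyEq_nhdsNE (hp : p ∈ S)
    (hF : ContinuousAt F p) (hfF : f =ᶠ[𝓝[≠] p] F) (hS : ∀ᶠ z in 𝓝[≠] p, z ∉ S) :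
    fillSingularities S f =ᶠ[𝓝 p] F := by
  refine eventuallyEq_nhds_of_eventuallyEq_nhdsNE ?_ ?_
  · filter_upwards [hS, hfF] with z hz hfz
    rw [fillSingularities_of_notMem hz, hfz]
  · have hlim : Tendsto f (𝓝[≠] p) (𝓝 (F p)) :=
      (hF.tendsto.mono_left nhdsWithin_le_nhds).congr' hfF.symm
    simp only [fillSingularities, hp, if_true, hlim.limUnder_eq]

end FillSingularities

section LocalModel

variable {μ ν g h : ℂ → ℂ} {p : ℂ} {m : ℕ}

theorem eventually_ne_zero_of_eq_pow_mul {n : ℕ} (hg : ContinuousAt g p) (hgp : g p ≠ 0)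
    (hμ : ∀ᶠ z in 𝓝 p, μ z = (z - p) ^ n * g z) : ∀ᶠ z in 𝓝[≠] p, μ z ≠ 0 := by
  filter_upwards [nhdsWithin_le_nhds hμ, nhdsWithin_le_nhds (hg.eventually_ne hgp),
    self_mem_nhdsWithin] with z hμz hgz hzp
  rw [hμz]
  exact mul_ne_zero (pow_ne_zero _ (sub_ne_zero.mpr hzp)) hgz

theorem mul_pow_eventuallyEq_nhdsNE {k : ℕ} (hk : k ≤ 2)
    (hμ : ∀ᶠ z in 𝓝 p, μ z = (z - p) ^ (2 * m) * g z)
    (hν : ∀ᶠ z in 𝓝[≠] p, ν z = h z / (z - p) ^ m) :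
    (fun z => μ z * ν z ^ k) =ᶠ[𝓝[≠] p] fun z => (z - p) ^ ((2 - k) * m) * (g z * h z ^ k) := by
  filter_upwards [nhdsWithin_le_nhds hμ, hν, self_mem_nhdsWithin] with z hμz hνz hzp
  have hsplit : (z - p) ^ (2 * m) = (z - p) ^ ((2 - k) * m) * ((z - p) ^ m) ^ k := by
    rw [← pow_mul, ← pow_add, mul_comm m k, ← add_mul, Nat.sub_add_cancel hk]
  have hpow : (z - p) ^ m ≠ 0 := pow_ne_zero _ (sub_ne_zero.mpr hzp)
  rw [hμz, hνz, hsplit, div_pow]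
  field_simp

end LocalModel

def HasEvenZeroAndHalfPoleAt (μ ν : ℂ → ℂ) (p : ℂ) : Prop :=
  ∃ m : ℕ, ∃ g h : ℂ → ℂ, AnalyticAt ℂ g p ∧ AnalyticAt ℂ h p ∧ g p ≠ 0 ∧ h p ≠ 0 ∧
    (∀ᶠ z in 𝓝 p, μ z = (z - p) ^ (2 * m) * g z) ∧ ∀ᶠ z in 𝓝[≠] p, ν z = h z / (z - p) ^ m

section WeierstrassData

variable {U : Set ℂ} {μ ν : ℂ → ℂ}

theorem isOpen_diff_preimage_zero (hU : IsOpen U) (hμ : DifferentiableOn ℂ μ U) :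
    IsOpen (U \ μ ⁻¹' {0}) := by
  simpa only [Set.sdiff_eq, Set.preimage_compl] using
    hμ.continuousOn.isOpen_inter_preimage hU isClosed_singleton.isOpen_compl

variable (hord : ∀ p ∈ U, μ p = 0 → HasEvenZeroAndHalfPoleAt μ ν p)
include hord

theorem differentiableOn_fillSingularities_mul_pow (hU : IsOpen U)
    (hμ : DifferentiableOn ℂ μ U) (hν : DifferentiableOn ℂ ν (U \ μ ⁻¹' {0}))
    {k : ℕ} (hk : k ≤ 2) :
    DifferentiableOn ℂ (fillSingularities (μ ⁻¹' {0}) fun z => μ z * ν z ^ k) U := by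
  intro p hpU
  refine DifferentiableAt.differentiableWithinAt ?_
  by_cases hμp : μ p = 0
  · obtain ⟨m, g, h, hg, hh, hgp, -, hμeq, hνeq⟩ := hord p hpU hμp
    have hF : DifferentiableAt ℂ (fun z => (z - p) ^ ((2 - k) * m) * (g z * h z ^ k)) p := by
      fun_prop
    exact hF.congr_of_eventuallyEq <| fillSingularities_eventuallyEq_of_eventuallyEq_nhdsNE hμp
      hF.continuousAt (mul_pow_eventuallyEq_nhdsNE hk hμeq hνeq)
      (eventually_ne_zero_of_eq_pow_mul hg.continuousAt hgp hμeq)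
  · have hV : U \ μ ⁻¹' {0} ∈ 𝓝 p := (isOpen_diff_preimage_zero hU hμ).mem_nhds ⟨hpU, hμp⟩
    have hf : DifferentiableAt ℂ (fun z => μ z * ν z ^ k) p :=
      (hμ.differentiableAt (hU.mem_nhds hpU)).mul ((hν.differentiableAt hV).pow k)
    exact hf.congr_of_eventuallyEq
      (fillSingularities_eventuallyEq_self (mem_of_superset hV fun _ hz => hz.2))

theorem fillSingularities_mul_sq_ne_zero {p : ℂ} (hpU : p ∈ U) (hμp : μ p = 0) :
    fillSingularities (μ ⁻¹' {0}) (fun z => μ z * ν z ^ 2) p ≠ 0 := by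
  obtain ⟨m, g, h, hg, hh, hgp, hhp, hμeq, hνeq⟩ := hord p hpU hμp
  have hF : ContinuousAt (fun z => (z - p) ^ ((2 - 2) * m) * (g z * h z ^ 2)) p := by
    have := hg.continuousAt; have := hh.continuousAt; fun_prop
  have hmodel := mul_pow_eventuallyEq_nhdsNE (k := 2) le_rfl hμeq hνeq
  have hisolated := eventually_ne_zero_of_eq_pow_mul hg.continuousAt hgp hμeq
  have hfill := fillSingularities_eventuallyEq_of_eventuallyEq_nhdsNE (S := μ ⁻¹' {0})
    hμp hF hmodel hisolated
  rw [hfill.eq_of_nhds, Nat.sub_self, zero_mul, pow_zero, one_mul]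
  exact mul_ne_zero hgp (pow_ne_zero 2 hhp)

end WeierstrassData

theorem weierstrass_pair_extends_general
    (U : Set ℂ) (hU : IsOpen U)
    (μ ν : ℂ → ℂ)
    (hμ : DifferentiableOn ℂ μ U)
    (hν : DifferentiableOn ℂ ν (U \ μ ⁻¹' {0}))
    (hord : ∀ p ∈ U, μ p = 0 →
      ∃ m : ℕ, 0 < m ∧ ∃ g h : ℂ → ℂ,
        AnalyticAt ℂ g p ∧ AnalyticAt ℂ h p ∧ g p ≠ 0 ∧ h p ≠ 0 ∧
        (∀ᶠ z in nhds p, μ z = (z - p) ^ (2 * m) * g z) ∧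
        (∀ᶠ z in nhdsWithin p {p}ᶜ, ν z = h z / (z - p) ^ m)) :
    ∃ Φ₁ Φ₂ Φ₃ : ℂ → ℂ,
      DifferentiableOn ℂ Φ₁ U ∧ DifferentiableOn ℂ Φ₂ U ∧ DifferentiableOn ℂ Φ₃ U ∧
      (∀ z ∈ U, μ z ≠ 0 →
        Φ₁ z = μ z / 2 * (1 - ν z ^ 2) ∧
        Φ₂ z = I * μ z / 2 * (1 + ν z ^ 2) ∧
        Φ₃ z = μ z * ν z) ∧
      (∀ z ∈ U, ¬(Φ₁ z = 0 ∧ Φ₂ z = 0 ∧ Φ₃ z = 0)) := by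
  replace hord : ∀ p ∈ U, μ p = 0 → HasEvenZeroAndHalfPoleAt μ ν p := fun p hp hμp =>
    let ⟨m, _, data⟩ := hord p hp hμp
    ⟨m, data⟩
  set ψ := fillSingularities (μ ⁻¹' {0}) fun z => μ z * ν z ^ 2
  set χ := fillSingularities (μ ⁻¹' {0}) fun z => μ z * ν z ^ 1
  have hψ : DifferentiableOn ℂ ψ U :=
    differentiableOn_fillSingularities_mul_pow hord hU hμ hν le_rfl
  have hχ : DifferentiableOn ℂ χ U :=
    differentiableOn_fillSingularities_mul_pow hord hU hμ hν one_le_two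
  refine ⟨fun z => (μ z - ψ z) / 2, fun z => I * (μ z + ψ z) / 2, χ,
    (hμ.sub hψ).div_const 2, ((hμ.add hψ).const_mul I).div_const 2, hχ, ?_, ?_⟩
  · intro z _ hμz
    have hψz : ψ z = μ z * ν z ^ 2 := fillSingularities_of_notMem hμz
    have hχz : χ z = μ z * ν z ^ 1 := fillSingularities_of_notMem hμz
    refine ⟨?_, ?_, by rw [hχz, pow_one]⟩ <;> simp only [hψz] <;> ring
  · rintro z hz ⟨h₁, h₂, -⟩
    have hsum : μ z + ψ z = 0 := by simpa [I_ne_zero] using h₂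
    have hμz : μ z = 0 := by linear_combination h₁ + hsum / 2
    exact fillSingularities_mul_sq_ne_zero hord hz hμz (by linear_combination hsum - hμz)

/-- Let `μ` be holomorphic on an open connected `U`, not identically zero, and `ν`
holomorphic on `U` away from the zeros of `μ`, such that at every zero `p` of `μ`,
`μ` vanishes to some even order `2m` (`m > 0`) and `ν` has a pole of order exactly `m`
at `p`.  Then the functions `(μ/2)(1-ν²)`, `(iμ/2)(1+ν²)`, `μν` extend holomorphically
across the zeros of `μ` and the extensions have no common zero on `U`. -/
theorem weierstrass_pair_extends
    (U : Set ℂ) (hU : IsOpen U) (hUconn : IsConnected U)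
    (μ ν : ℂ → ℂ)
    (hμ : DifferentiableOn ℂ μ U) (hμne : ∃ p ∈ U, μ p ≠ 0)
    (hν : DifferentiableOn ℂ ν (U \ μ ⁻¹' {0}))
    (hord : ∀ p ∈ U, μ p = 0 →
      ∃ m : ℕ, 0 < m ∧ ∃ g h : ℂ → ℂ,
        AnalyticAt ℂ g p ∧ AnalyticAt ℂ h p ∧ g p ≠ 0 ∧ h p ≠ 0 ∧
        (∀ᶠ z in nhds p, μ z = (z - p) ^ (2 * m) * g z) ∧
        (∀ᶠ z in nhdsWithin p {p}ᶜ, ν z = h z / (z - p) ^ m)) :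
    ∃ Φ₁ Φ₂ Φ₃ : ℂ → ℂ,
      DifferentiableOn ℂ Φ₁ U ∧ DifferentiableOn ℂ Φ₂ U ∧ DifferentiableOn ℂ Φ₃ U ∧
      (∀ z ∈ U, μ z ≠ 0 →
        Φ₁ z = μ z / 2 * (1 - ν z ^ 2) ∧
        Φ₂ z = I * μ z / 2 * (1 + ν z ^ 2) ∧
        Φ₃ z = μ z * ν z) ∧
      (∀ z ∈ U, ¬(Φ₁ z = 0 ∧ Φ₂ z = 0 ∧ Φ₃ z = 0)) :=
  weierstrass_pair_extends_general U hU μ ν hμ hν hord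
end
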